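/- arXiv:2403.11279 — 2 statements merged into one kernel-verified Lean document; each statement's English description precedes it below -/
import Mathlib

section
/- Let O ⊆ ℝ³ be a nonempty compact convex set, r > 0, a ∈ ℝ³ with ‖a‖ = 1, h ∈ ℝ³, and let H := {x ∈ ℝ³ : ⟪a, x − h⟫ = 0}. Assume H ∩ interior(D_r(O)) ≠ ∅. Then for every x ∈ H with infDist x O = r, the vector v := P(a)(x − Π(x,O)) satisfies ⟪v, x − Π(x,O)⟫ > 0 and v ∈ tangentConeAt ℝ {y ∈ ℝ³ : infDist y O ≥ r} x. (This is the viability condition for the obstacle-avoidance control u = κ_r P(a) x_π at the inner boundary, where η = 1, established in the proof of Lemma 4.) -/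
open Metric Set Filter Topology
open scoped RealInnerProductSpace

abbrev E3 := EuclideanSpace ℝ (Fin 3)

/-- Orthogonal projection onto the plane orthogonal to the unit vector `a`. -/
noncomputable def Pproj (a x : E3) : E3 := x - ⟪a, x⟫ • a

/-!
Since `p` is the nearest point of the convex set `O` to `x`, the set `O` lies in the half-space
`⟪x - p, · - p⟫ ≤ 0`, so every `y` with `⟪x - p, y - x⟫ ≥ 0` is at distance at least `r` from `O`.
The vector `v = P(a)(x - p)` satisfies `⟪v, x - p⟫ = ‖v‖²`, hence the segment `[x, x + v]` stays
in `{infDist · O ≥ r}`. Finally `v ≠ 0`: otherwise `x - p` is parallel to `a`, the whole plane `H`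
lies in that half-space, yet `H` meets the interior of `D_r(O)`, where the distance is `< r`
because it grows at least linearly along every ray leaving a point of `O`.
-/

section NormedSpace

variable {E : Type*} [NormedAddCommGroup E] [NormedSpace ℝ E] {O : Set E}

/-- `z` is the convex combination `(1 + ε)⁻¹ • (z + ε • (z - q)) + (ε / (1 + ε)) • q`, and the
map `w ↦ (1 + ε)⁻¹ • w + (ε / (1 + ε)) • q` sends `O` into `O` contracting distances by `1 + ε`. -/
lemma one_add_mul_infDist_le_infDist_add_smul_sub (hO : Convex ℝ O) {q : E} (hq : q ∈ O)
    {ε : ℝ} (hε : 0 ≤ ε) (z : E) :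
    (1 + ε) * infDist z O ≤ infDist (z + ε • (z - q)) O := by
  have hε₁ : 0 < 1 + ε := by linarith
  rw [mul_comm, le_infDist ⟨q, hq⟩]
  intro w hw
  rw [← le_div_iff₀ hε₁]
  have hw' : (1 + ε)⁻¹ • w + (ε / (1 + ε)) • q ∈ O :=
    hO hw hq (by positivity) (by positivity) (by field_simp)
  have hdist : z - ((1 + ε)⁻¹ • w + (ε / (1 + ε)) • q) = (1 + ε)⁻¹ • (z + ε • (z - q) - w) := by
    match_scalars <;> field_simp
  calc infDist z O ≤ dist z ((1 + ε)⁻¹ • w + (ε / (1 + ε)) • q) := infDist_le_dist_of_mem hw'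
    _ = dist (z + ε • (z - q)) w / (1 + ε) := by
      rw [dist_eq_norm, hdist, norm_smul, Real.norm_of_nonneg (by positivity), dist_eq_norm,
        inv_mul_eq_div]

lemma infDist_lt_of_mem_interior_setOf_infDist_le (hO : Convex ℝ O) (hne : O.Nonempty) {r : ℝ}
    (hr : 0 < r) {z : E} (hz : z ∈ interior {x | infDist x O ≤ r}) : infDist z O < r := by
  by_contra! hrz
  obtain ⟨q, hq⟩ := hne
  have hlim : Tendsto (fun ε : ℝ ↦ z + ε • (z - q)) (𝓝[>] 0) (𝓝 z) := by
    have : Continuous fun ε : ℝ ↦ z + ε • (z - q) := by fun_prop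
    simpa using (this.tendsto 0).mono_left nhdsWithin_le_nhds
  obtain ⟨ε, hεz, hε⟩ :=
    ((hlim.eventually (isOpen_interior.mem_nhds hz)).and self_mem_nhdsWithin).exists
  have hgrow := one_add_mul_infDist_le_infDist_add_smul_sub hO hq hε.le z
  have hle : infDist (z + ε • (z - q)) O ≤ r := interior_subset (s := {x | infDist x O ≤ r}) hεz
  nlinarith

end NormedSpace

section InnerProductSpace

variable {F : Type*} [NormedAddCommGroup F] [InnerProductSpace ℝ F] {O : Set F}

lemma infDist_le_infDist_of_inner_nonneg (hO : Convex ℝ O) {x p : F} (hp : p ∈ O)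
    (hproj : ‖x - p‖ = infDist x O) {y : F} (hy : 0 ≤ ⟪x - p, y - x⟫) :
    infDist x O ≤ infDist y O := by
  rcases eq_or_ne x p with rfl | hxp
  · simpa [← hproj] using infDist_nonneg
  have hpos : 0 < ‖x - p‖ := norm_pos_iff.mpr (sub_ne_zero.mpr hxp)
  have hnormal : ∀ w ∈ O, ⟪x - p, w - p⟫ ≤ 0 := by
    refine (norm_eq_iInf_iff_real_inner_le_zero hO hp).mp ?_
    simp only [hproj, infDist_eq_iInf, dist_eq_norm]
  rw [← hproj, le_infDist ⟨p, hp⟩]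
  intro w hw
  refine le_of_mul_le_mul_left ?_ hpos
  calc ‖x - p‖ * ‖x - p‖ ≤ ⟪x - p, x - p⟫ + ⟪x - p, y - x⟫ + ⟪x - p, p - w⟫ := by
        rw [real_inner_self_eq_norm_mul_norm, ← neg_sub w p, inner_neg_right]
        linarith [hnormal w hw]
    _ = ⟪x - p, y - w⟫ := by rw [← inner_add_right, ← inner_add_right]; congr 1; abel
    _ ≤ ‖x - p‖ * dist y w := by rw [dist_eq_norm]; exact real_inner_le_norm _ _

end InnerProductSpace

section Pproj

variable {a : E3}

lemma inner_Pproj_right (ha : ‖a‖ = 1) (w : E3) : ⟪a, Pproj a w⟫ = 0 := by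
  rw [Pproj, inner_sub_right, real_inner_smul_right, real_inner_self_eq_norm_sq, ha]
  ring

lemma inner_Pproj_left_self (ha : ‖a‖ = 1) (w : E3) : ⟪Pproj a w, w⟫ = ‖Pproj a w‖ ^ 2 := by
  have hw : w = Pproj a w + ⟪a, w⟫ • a := (sub_add_cancel w _).symm
  nth_rw 2 [hw]
  rw [inner_add_right, real_inner_smul_right, real_inner_comm a, inner_Pproj_right ha,
    real_inner_self_eq_norm_sq, mul_zero, add_zero]

lemma eq_smul_of_Pproj_eq_zero {w : E3} (hw : Pproj a w = 0) : w = ⟪a, w⟫ • a :=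
  sub_eq_zero.mp hw

end Pproj

theorem stmt11_general (O : Set E3) (hOconv : Convex ℝ O)
    (r : ℝ) (hr : 0 < r) (a h : E3) (ha : ‖a‖ = 1)
    (H : Set E3) (hH : H = {x : E3 | ⟪a, x - h⟫ = 0})
    (hHint : (H ∩ interior {x : E3 | infDist x O ≤ r}).Nonempty)
    (x : E3) (hxH : x ∈ H) (hx : infDist x O = r)
    (p : E3) (hp : p ∈ O) (hproj : ‖x - p‖ = infDist x O) :
    0 < ⟪Pproj a (x - p), x - p⟫ ∧
    Pproj a (x - p) ∈ tangentConeAt ℝ {y : E3 | r ≤ infDist y O} x := by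
  subst hH hx
  set v := Pproj a (x - p)
  have hv : v ≠ 0 := by
    intro hv
    obtain ⟨z, hzH, hz⟩ := hHint
    have haz : ⟪a, z - x⟫ = 0 := by
      rw [← sub_sub_sub_cancel_right z x h, inner_sub_right, hzH, hxH, sub_zero]
    have hzx : ⟪x - p, z - x⟫ = 0 := by
      rw [eq_smul_of_Pproj_eq_zero hv, real_inner_smul_left, haz, mul_zero]
    have hxz := infDist_le_infDist_of_inner_nonneg hOconv hp hproj hzx.ge
    have hzr := infDist_lt_of_mem_interior_setOf_infDist_le hOconv ⟨p, hp⟩ hr hz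
    linarith
  refine ⟨by rw [inner_Pproj_left_self ha]; positivity, ?_⟩
  have hseg : segment ℝ x (x + v) ⊆ {y | infDist x O ≤ infDist y O} := by
    rw [segment_eq_image']
    rintro _ ⟨θ, hθ, rfl⟩
    refine infDist_le_infDist_of_inner_nonneg hOconv hp hproj ?_
    rw [add_sub_cancel_left, add_sub_cancel_left, real_inner_smul_right, real_inner_comm,
      inner_Pproj_left_self ha]
    exact mul_nonneg hθ.1 (sq_nonneg _)
  simpa using mem_tangentConeAt_of_segment_subset hseg

/-- Viability condition for the obstacle-avoidance control `u = κ_r P(a) x_π` at the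
inner boundary (η = 1), from the proof of Lemma 4: if the hyperplane `H` through `h`
orthogonal to `a` meets the interior of `D_r(O)`, then at every `x ∈ H` with
`infDist x O = r`, the vector `v = P(a)(x − Π(x,O))` satisfies `⟪v, x − Π(x,O)⟫ > 0`
and lies in the tangent cone of `{y : infDist y O ≥ r}` at `x`. -/
theorem stmt11 (O : Set E3) (hOne : O.Nonempty) (hOcomp : IsCompact O) (hOconv : Convex ℝ O)
    (r : ℝ) (hr : 0 < r) (a h : E3) (ha : ‖a‖ = 1)
    (H : Set E3) (hH : H = {x : E3 | ⟪a, x - h⟫ = 0})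
    (hHint : (H ∩ interior {x : E3 | infDist x O ≤ r}).Nonempty)
    (x : E3) (hxH : x ∈ H) (hx : infDist x O = r)
    (p : E3) (hp : p ∈ O) (hproj : ‖x - p‖ = infDist x O) :
    0 < ⟪Pproj a (x - p), x - p⟫ ∧
    Pproj a (x - p) ∈ tangentConeAt ℝ {y : E3 | r ≤ infDist y O} x :=
  stmt11_general O hOconv r hr a h ha H hH hHint x hxH hx p hp hproj
end

section
/- Let O ⊆ ℝ³ be a nonempty compact convex set, r > 0, a ∈ ℝ³ with ‖a‖ = 1, h ∈ ℝ³, and let H := {x ∈ ℝ³ : ⟪a, x − h⟫ = 0}. Assume H ∩ interior(D_r(O)) ≠ ∅. Then for every x ∈ H with infDist x O = r, the vector v := −P(a)(x − Π(x,O)) satisfies ⟪v, x − Π(x,O)⟫ < 0 and v ∈ tangentConeAt ℝ {y ∈ ℝ³ : infDist y O ≤ r} x. (This is the viability condition for the obstacle-avoidance control u = −κ_r P(a) x_π at the outer boundary, where η = −1, established in the proof of Lemma 4.) -/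
open Metric Set
open scoped RealInnerProductSpace

/-!
Write `w = x - p` with `p = Π(x,O)`, so `‖w‖ = r`. By the obtuse-angle characterisation of the
nearest point, `D_r(O)` lies in the half-space `{y : ⟪w, y - x⟫ ≤ 0}`, so its interior lies in the
open half-space. If `w` were parallel to `a`, the plane `H` would be the boundary hyperplane of that
half-space and could not meet `interior D_r(O)`. Hence `P(a) w ≠ 0` and
`⟪-P(a) w, w⟫ = -‖P(a) w‖² < 0`. A direction making an obtuse angle with `x - p` enters the ball
`closedBall p r ⊆ D_r(O)`, so it is tangent.
-/

open Filter Topology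

section InnerProductSpace

variable {F : Type*} [NormedAddCommGroup F] [InnerProductSpace ℝ F]

theorem inner_sub_nonpos_of_infDist_le {O : Set F} (hOc : IsCompact O) (hOconv : Convex ℝ O)
    {x p y : F} (hp : p ∈ O) (hproj : ‖x - p‖ = infDist x O) (hy : infDist y O ≤ infDist x O) :
    ⟪x - p, y - x⟫ ≤ 0 := by
  have hobtuse : ∀ q ∈ O, ⟪x - p, q - p⟫ ≤ 0 :=
    (norm_eq_iInf_iff_real_inner_le_zero hOconv hp).1 <| by
      simp only [hproj, infDist_eq_iInf, dist_eq_norm]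
  obtain ⟨q, hqO, hyq⟩ := hOc.exists_infDist_eq_dist ⟨p, hp⟩ y
  have hyq' : ‖y - q‖ ≤ ‖x - p‖ := by rw [← dist_eq_norm, ← hyq, hproj]; exact hy
  calc ⟪x - p, y - x⟫ = ⟪x - p, y - q⟫ + ⟪x - p, q - p⟫ - ‖x - p‖ ^ 2 := by
        rw [← real_inner_self_eq_norm_sq, ← inner_add_right, ← inner_sub_right]
        congr 1; abel
    _ ≤ ‖x - p‖ * ‖y - q‖ + 0 - ‖x - p‖ ^ 2 := by
        gcongr
        exacts [real_inner_le_norm _ _, hobtuse q hqO]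
    _ ≤ 0 := by nlinarith [norm_nonneg (x - p)]

theorem inner_sub_neg_of_mem_interior {S : Set F} {w x z : F} (hS : ∀ y ∈ S, ⟪w, y - x⟫ ≤ 0)
    (hw : w ≠ 0) (hz : z ∈ interior S) : ⟪w, z - x⟫ < 0 := by
  have hline : Tendsto (fun t : ℝ => z + t • w) (𝓝 0) (𝓝 z) :=
    (by fun_prop : Continuous fun t : ℝ => z + t • w).tendsto' 0 z (by simp)
  obtain ⟨t, hmem, ht⟩ :=
    (((hline.eventually (mem_interior_iff_mem_nhds.1 hz)).filter_mono nhdsWithin_le_nhds).and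
      (self_mem_nhdsWithin : Ioi (0 : ℝ) ∈ 𝓝[>] 0)).exists
  have hle := hS _ hmem
  rw [add_sub_right_comm, inner_add_right, real_inner_smul_right,
    real_inner_self_eq_norm_sq] at hle
  have hpos : 0 < t * ‖w‖ ^ 2 := mul_pos ht (by positivity)
  linarith

theorem eventually_norm_add_smul_lt {v w : F} (h : ⟪v, w⟫ < 0) :
    ∀ᶠ t in 𝓝[>] (0 : ℝ), ‖w + t • v‖ < ‖w‖ := by
  have hslope : Tendsto (fun t : ℝ => 2 * ⟪v, w⟫ + t * ‖v‖ ^ 2) (𝓝 0) (𝓝 (2 * ⟪v, w⟫)) :=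
    (by fun_prop : Continuous fun t : ℝ => 2 * ⟪v, w⟫ + t * ‖v‖ ^ 2).tendsto' 0 _ (by simp)
  filter_upwards [self_mem_nhdsWithin, (hslope.eventually
    (gt_mem_nhds (by linarith : 2 * ⟪v, w⟫ < 0))).filter_mono nhdsWithin_le_nhds] with t ht hneg
  have hsq : ‖w + t • v‖ ^ 2 = ‖w‖ ^ 2 + t * (2 * ⟪v, w⟫ + t * ‖v‖ ^ 2) := by
    rw [norm_add_sq_real, real_inner_smul_right, norm_smul, Real.norm_eq_abs,
      abs_of_pos (mem_Ioi.1 ht), real_inner_comm]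
    ring
  have hdecr : t * (2 * ⟪v, w⟫ + t * ‖v‖ ^ 2) < 0 := mul_neg_of_pos_of_neg ht hneg
  exact (pow_lt_pow_iff_left₀ (norm_nonneg _) (norm_nonneg _) two_ne_zero).1 (by linarith)

theorem mem_tangentConeAt_closedBall_of_inner_neg {c x v : F} (h : ⟪v, x - c⟫ < 0) :
    v ∈ tangentConeAt ℝ (closedBall c ‖x - c‖) x :=
  mem_tangentConeAt_of_add_smul_mem (tendsto_id'.2 (nhdsGT_le_nhdsNE 0)) <|
    (eventually_norm_add_smul_lt h).mono fun t ht => by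
      rw [mem_closedBall, dist_eq_norm, add_sub_right_comm]
      exact ht.le

end InnerProductSpace

theorem inner_Pproj_self {a : E3} (ha : ‖a‖ = 1) (w : E3) :
    ⟪Pproj a w, w⟫ = ‖Pproj a w‖ ^ 2 := by
  rw [Pproj, norm_sub_sq_real, inner_sub_left, real_inner_smul_left, real_inner_smul_right,
    norm_smul, Real.norm_eq_abs, ha, mul_one, sq_abs, real_inner_self_eq_norm_sq,
    real_inner_comm a w]
  ring

theorem stmt12_general (O : Set E3) (hOcomp : IsCompact O) (hOconv : Convex ℝ O)
    (r : ℝ) (hr : 0 < r) (a h : E3) (ha : ‖a‖ = 1)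
    (H : Set E3) (hH : H = {x : E3 | ⟪a, x - h⟫ = 0})
    (hHint : (H ∩ interior {x : E3 | infDist x O ≤ r}).Nonempty)
    (x : E3) (hxH : x ∈ H) (hx : infDist x O = r)
    (p : E3) (hp : p ∈ O) (hproj : ‖x - p‖ = infDist x O) :
    ⟪-Pproj a (x - p), x - p⟫ < 0 ∧
    -Pproj a (x - p) ∈ tangentConeAt ℝ {y : E3 | infDist y O ≤ r} x := by
  subst hH
  have hsupp : ∀ y ∈ {y : E3 | infDist y O ≤ r}, ⟪x - p, y - x⟫ ≤ 0 := fun y hy =>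
    inner_sub_nonpos_of_infDist_le hOcomp hOconv hp hproj (hx ▸ hy)
  have hP : Pproj a (x - p) ≠ 0 := by
    obtain ⟨z, hzH, hz⟩ := hHint
    have hlt := inner_sub_neg_of_mem_interior hsupp
      (norm_ne_zero_iff.1 (by rw [hproj, hx]; exact hr.ne')) hz
    intro hpar
    have hza : ⟪a, z - x⟫ = 0 := by
      rw [← sub_sub_sub_cancel_right z x h, inner_sub_right, show ⟪a, z - h⟫ = 0 from hzH,
        show ⟪a, x - h⟫ = 0 from hxH, sub_zero]
    rw [sub_eq_zero.1 hpar, real_inner_smul_left, hza, mul_zero] at hlt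
    exact hlt.false
  have hobtuse : ⟪-Pproj a (x - p), x - p⟫ < 0 := by
    rw [inner_neg_left, inner_Pproj_self ha, neg_lt_zero]
    exact pow_pos (norm_pos_iff.2 hP) 2
  have hball : closedBall p ‖x - p‖ ⊆ {y : E3 | infDist y O ≤ r} := fun y hy =>
    (infDist_le_dist_of_mem hp).trans (by rw [← hx, ← hproj]; exact hy)
  exact ⟨hobtuse, tangentConeAt_mono hball (mem_tangentConeAt_closedBall_of_inner_neg hobtuse)⟩

/-- Viability condition for the obstacle-avoidance control `u = −κ_r P(a) x_π` at the
outer boundary (η = −1), from the proof of Lemma 4: if the hyperplane `H` through `h`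
orthogonal to `a` meets the interior of `D_r(O)`, then at every `x ∈ H` with
`infDist x O = r`, the vector `v = −P(a)(x − Π(x,O))` satisfies `⟪v, x − Π(x,O)⟫ < 0`
and lies in the tangent cone of `{y : infDist y O ≤ r}` at `x`. -/
theorem stmt12 (O : Set E3) (hOne : O.Nonempty) (hOcomp : IsCompact O) (hOconv : Convex ℝ O)
    (r : ℝ) (hr : 0 < r) (a h : E3) (ha : ‖a‖ = 1)
    (H : Set E3) (hH : H = {x : E3 | ⟪a, x - h⟫ = 0})
    (hHint : (H ∩ interior {x : E3 | infDist x O ≤ r}).Nonempty)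
    (x : E3) (hxH : x ∈ H) (hx : infDist x O = r)
    (p : E3) (hp : p ∈ O) (hproj : ‖x - p‖ = infDist x O) :
    ⟪-Pproj a (x - p), x - p⟫ < 0 ∧
    -Pproj a (x - p) ∈ tangentConeAt ℝ {y : E3 | infDist y O ≤ r} x :=
  stmt12_general O hOcomp hOconv r hr a h ha H hH hHint x hxH hx p hp hproj
end
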